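/- Fix m ≥ 0. For every Type 1 Dyck triple (E,F,G) of height m every injection step in φ₁⁻¹ is defined, φ₁⁻¹(E,F,G) is an ordinary Dyck sequence with maximum m, and φ₁(φ₁⁻¹(E,F,G)) = (E,F,G); conversely φ₁⁻¹(φ₁(D)) = D for every ordinary Dyck sequence D with max(D) = m. Thus φ₁ and φ₁⁻¹ are mutually inverse bijections between ordinary Dyck sequences with maximum m and Type 1 Dyck triples of height m. -/

import Mathlib

/-!
Extraction and injection undo each other one step at a time. If `j` is the leftmost non-final
eligible index of an ordinary Dyck sequence `C` and `e = c_j`, then the unique earlier `e - 1`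
is the first visit to level `e - 1` and sits at `j - 1`; so removing `c_j` and injecting `e`
again puts it back at `j`. Conversely, injecting `e` after the first `e - 1` of a sequence
creates an eligible index there, and the reverse Dyck condition `e ≤ e' + 1` for the entry
`e'` injected just before it rules out eligible indices to its left; hence
extraction returns exactly the injected entries, in order. Splitting after the last maximum
recovers `G`, because `G` stays below `m`.
-/

/-- A finite integer sequence is an *affine Dyck sequence* if each entry is at
most the previous entry plus 1. -/
def AffineDyck (x : List ℤ) : Prop := List.Chain' (fun a b => b ≤ a + 1) x

/-- A finite integer sequence is a *reverse Dyck sequence* if each entry is at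
least the previous entry minus 1. -/
def ReverseDyck (x : List ℤ) : Prop := List.Chain' (fun a b => a - 1 ≤ b) x

/-- An *ordinary Dyck sequence* is a nonempty affine Dyck sequence starting at
`0` with all entries nonnegative. -/
def OrdDyck (x : List ℤ) : Prop :=
  x ≠ [] ∧ AffineDyck x ∧ x.getD 0 0 = 0 ∧ ∀ a ∈ x, 0 ≤ a

/-- An index `j` of `C` is *eligible* if there is exactly one index `i < j`
with `C i = C j − 1`, and either `j` is the final index or the next entry is
at most `C j`. -/
def Eligible (C : List ℤ) (j : ℕ) : Prop :=
  j < C.length ∧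
  ((Finset.range j).filter (fun i => C.getD i 0 = C.getD j 0 - 1)).card = 1 ∧
  (j + 1 = C.length ∨ C.getD (j + 1) 0 ≤ C.getD j 0)

instance (C : List ℤ) (j : ℕ) : Decidable (Eligible C j) := by
  unfold Eligible; infer_instance

/-- A *Dyck `m`-skeleton*: an ordinary Dyck sequence with maximum `m`, whose
last entry equals `m`, having no eligible index other than possibly the final
one. -/
def DyckSkeleton (m : ℤ) (F : List ℤ) : Prop :=
  OrdDyck F ∧ (∀ a ∈ F, a ≤ m) ∧ F.getLast? = some m ∧
  ∀ j, Eligible F j → j + 1 = F.length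

/-- The leftmost eligible index of `C` that is not the final index. -/
def eligNF? (C : List ℤ) : Option ℕ :=
  (List.range C.length).find? (fun j => decide (Eligible C j ∧ j + 1 ≠ C.length))

/-- The extraction loop: while the current sequence has a nonfinal eligible
index, remove the entry at the leftmost such index and append the removed
value to the output `E`. -/
def extractAux : ℕ → List ℤ → List ℤ → List ℤ × List ℤ
  | 0, E, C => (E, C)
  | fuel + 1, E, C =>
    match eligNF? C with
    | none => (E, C)
    | some j => extractAux fuel (E ++ [C.getD j 0]) (C.eraseIdx j)

/-- The map `φ₁`: split `D` after its last maximum into `C` and `G`, fully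
extract nonfinal extractable entries of `C` into `E`, and return the
resulting triple `(E, F, G)`. -/
def phi1 (D : List ℤ) : List ℤ × List ℤ × List ℤ :=
  let m := D.foldr max 0
  let k := D.length - 1 - D.reverse.findIdx (fun a => decide (a = m))
  let EF := extractAux (k + 1) [] (D.take (k + 1))
  (EF.1, EF.2, D.drop (k + 1))

/-- Injection of `e` into `C`: insert `e` immediately after the first
occurrence of `e − 1`. -/
def inject (C : List ℤ) (e : ℤ) : List ℤ :=
  let p := C.findIdx (fun a => decide (a = e - 1))
  C.take (p + 1) ++ e :: C.drop (p + 1)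

/-- Inject the entries of `E = (e_0, …, e_{ℓ−1})` into `F`, from the last
entry `e_{ℓ−1}` down to `e_0`. -/
def injectAll (F : List ℤ) (E : List ℤ) : List ℤ :=
  E.foldr (fun e C => inject C e) F

/-- Every injection step is defined: at each step the value one less than the
injected entry occurs in the current sequence. -/
def InjectDefined (F : List ℤ) : List ℤ → Prop
  | [] => True
  | e :: E => InjectDefined F E ∧ (e - 1) ∈ injectAll F E

/-- The inverse map `φ₁⁻¹(E, F, G)`. -/
def phi1inv (E F G : List ℤ) : List ℤ := injectAll F E ++ G

/-- A *Type 1 Dyck triple of height `m`*: `F` a Dyck `m`-skeleton, `E` a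
reverse `[1, m]` Dyck sequence, `G` an affine `[0, m−1]` Dyck sequence. -/
def Type1 (m : ℤ) (E F G : List ℤ) : Prop :=
  DyckSkeleton m F ∧
  ReverseDyck E ∧ (∀ a ∈ E, 1 ≤ a ∧ a ≤ m) ∧
  AffineDyck G ∧ (∀ a ∈ G, 0 ≤ a ∧ a ≤ m - 1)

namespace List

variable {α : Type*}

theorem insertIdx_eq_take_append_cons_drop (l : List α) (x : α) {n : ℕ} (hn : n ≤ l.length) :
    l.insertIdx n x = l.take n ++ x :: l.drop n := by
  induction l generalizing n with
  | nil => simp_all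
  | cons a l ih => cases n <;> simp_all [insertIdx_succ_cons]

theorem getD_eraseIdx_of_lt (l : List α) (d : α) {j i : ℕ} (hi : i < j) :
    (l.eraseIdx j).getD i d = l.getD i d := by
  simp [getD_eq_getElem?_getD, getElem?_eraseIdx_of_lt hi]

theorem getD_eraseIdx_of_ge (l : List α) (d : α) {j i : ℕ} (hi : j ≤ i) :
    (l.eraseIdx j).getD i d = l.getD (i + 1) d := by
  simp [getD_eq_getElem?_getD, getElem?_eraseIdx_of_ge hi]

theorem getD_insertIdx_of_lt (l : List α) (x d : α) {n i : ℕ} (hi : i < n) :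
    (l.insertIdx n x).getD i d = l.getD i d := by
  simp [getD_eq_getElem?_getD, getElem?_insertIdx_of_lt hi]

theorem getD_insertIdx_self (l : List α) (x d : α) {n : ℕ} (hn : n ≤ l.length) :
    (l.insertIdx n x).getD n d = x := by
  simp [getD_eq_getElem?_getD, getElem?_insertIdx_self, hn]

theorem getD_insertIdx_of_ge (l : List α) (x d : α) {n i : ℕ} (hi : n ≤ i) :
    (l.insertIdx n x).getD (i + 1) d = l.getD i d := by
  simp [getD_eq_getElem?_getD, getElem?_insertIdx_of_gt (Nat.lt_succ_of_le hi)]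

theorem getLast?_eq_some_getD {l : List α} (d : α) (hl : l ≠ []) :
    l.getLast? = some (l.getD (l.length - 1) d) := by
  rw [getLast?_eq_getElem?, getD_eq_getElem?_getD,
    getElem?_eq_getElem (by simpa [Nat.pos_iff_ne_zero] using hl)]
  rfl

theorem foldr_max_eq_of_mem [LinearOrder α] {l : List α} {b m : α} (hm : m ∈ l)
    (hle : ∀ a ∈ l, a ≤ m) (hb : b ≤ m) : l.foldr max b = m := by
  refine le_antisymm ?_ (le_max_of_le' b hm le_rfl)
  clear hm
  induction l with
  | nil => exact hb
  | cons a l ih => simp_all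

theorem exists_eq_append_getLast?_eq_of_mem {l : List α} {m : α} (hm : m ∈ l) :
    ∃ C G, l = C ++ G ∧ C.getLast? = some m ∧ m ∉ G := by
  induction l using reverseRecOn with
  | nil => simp at hm
  | append_singleton l a ih =>
    by_cases ha : a = m
    · exact ⟨l ++ [a], [], by simp, by simp [ha], by simp⟩
    · obtain ⟨C, G, rfl, hC, hG⟩ := ih (by simpa [Ne.symm ha] using hm)
      exact ⟨C, G ++ [a], by simp, hC, by simp [hG, Ne.symm ha]⟩

end List

section Affine

variable {C : List ℤ}

theorem affineDyck_iff_getD :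
    AffineDyck C ↔ ∀ i, i + 1 < C.length → C.getD (i + 1) 0 ≤ C.getD i 0 + 1 := by
  rw [AffineDyck, List.Chain', List.isChain_iff_getElem]
  refine forall_congr' fun i => forall_congr' fun hi => ?_
  rw [List.getD_eq_getElem _ _ hi, List.getD_eq_getElem _ _ (by omega)]

theorem AffineDyck.getD_succ_le (hC : AffineDyck C) {i : ℕ} (hi : i + 1 < C.length) :
    C.getD (i + 1) 0 ≤ C.getD i 0 + 1 :=
  affineDyck_iff_getD.mp hC i hi

theorem AffineDyck.exists_first_eq (hC : AffineDyck C) {a b : ℕ} {v : ℤ} (hab : a ≤ b)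
    (hb : b < C.length) (ha : C.getD a 0 ≤ v) (hvb : v ≤ C.getD b 0) :
    ∃ t, a ≤ t ∧ t ≤ b ∧ C.getD t 0 = v ∧
      ∀ s, a ≤ s → s < t → C.getD s 0 < v := by
  classical
  have hP : ∃ t, a ≤ t ∧ v ≤ C.getD t 0 := ⟨b, hab, hvb⟩
  set t := Nat.find hP
  obtain ⟨hat, hvt⟩ : a ≤ t ∧ v ≤ C.getD t 0 := Nat.find_spec hP
  have hbelow : ∀ s, a ≤ s → s < t → C.getD s 0 < v := fun s has hst =>
    lt_of_not_ge fun h => Nat.find_min hP hst ⟨has, h⟩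
  have htb : t ≤ b := Nat.find_min' hP ⟨hab, hvb⟩
  refine ⟨t, hat, htb, le_antisymm ?_ hvt, hbelow⟩
  rcases hat.eq_or_lt with h | h
  · rwa [← h]
  · have hstep := hC.getD_succ_le (i := t - 1) (by omega)
    have hprev := hbelow (t - 1) (by omega) (by omega)
    rw [Nat.sub_add_cancel (by omega)] at hstep
    omega

theorem AffineDyck.insertIdx (hC : AffineDyck C) {p : ℕ} {e : ℤ} (hp : p < C.length)
    (hup : e ≤ C.getD p 0 + 1) (hdown : C.getD (p + 1) 0 ≤ e + 1) :
    AffineDyck (C.insertIdx (p + 1) e) := by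
  rw [affineDyck_iff_getD] at hC ⊢
  intro i hi
  rw [List.length_insertIdx_of_le_length hp] at hi
  rcases lt_trichotomy i p with h | rfl | h
  · rw [List.getD_insertIdx_of_lt _ _ _ (by omega), List.getD_insertIdx_of_lt _ _ _ (by omega)]
    exact hC i (by omega)
  · rw [List.getD_insertIdx_self _ _ _ hp, List.getD_insertIdx_of_lt _ _ _ (by omega)]
    exact hup
  · obtain ⟨k, rfl⟩ : ∃ k, i = k + 1 := ⟨i - 1, by omega⟩
    rw [List.getD_insertIdx_of_ge _ _ _ (by omega)]
    rcases (Nat.succ_le_of_lt h).eq_or_lt with h' | h'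
    · rw [← h', List.getD_insertIdx_self _ _ _ hp]
      exact hdown
    · rw [List.getD_insertIdx_of_ge _ _ _ (by omega)]
      exact hC k (by omega)

theorem AffineDyck.eraseIdx (hC : AffineDyck C) {j : ℕ} (hj : 0 < j)
    (hjump : C.getD (j + 1) 0 ≤ C.getD (j - 1) 0 + 1) : AffineDyck (C.eraseIdx j) := by
  rw [affineDyck_iff_getD] at hC ⊢
  intro i hi
  have hi' : i + 1 < C.length := by rw [List.length_eraseIdx] at hi; split at hi <;> omega
  rcases lt_trichotomy (i + 1) j with h | rfl | h
  · rw [List.getD_eraseIdx_of_lt _ _ h, List.getD_eraseIdx_of_lt _ _ (by omega)]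
    exact hC i hi'
  · rw [List.getD_eraseIdx_of_ge _ _ le_rfl, List.getD_eraseIdx_of_lt _ _ (by omega)]
    simpa using hjump
  · rw [List.getD_eraseIdx_of_ge _ _ (by omega), List.getD_eraseIdx_of_ge _ _ (by omega)]
    exact hC (i + 1) (by rw [List.length_eraseIdx] at hi; split at hi <;> omega)

end Affine

def FirstHit (C : List ℤ) (v : ℤ) (p : ℕ) : Prop :=
  p < C.length ∧ C.getD p 0 = v ∧ ∀ s < p, C.getD s 0 < v

section FirstHit

variable {C : List ℤ} {v e : ℤ} {p : ℕ}

theorem AffineDyck.exists_firstHit (hC : AffineDyck C) {b : ℕ} (hb : b < C.length)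
    (h0 : C.getD 0 0 ≤ v) (hvb : v ≤ C.getD b 0) : ∃ p ≤ b, FirstHit C v p := by
  obtain ⟨p, -, hpb, hp, hbelow⟩ := hC.exists_first_eq (Nat.zero_le b) hb h0 hvb
  exact ⟨p, hpb, by omega, hp, fun s hs => hbelow s s.zero_le hs⟩

theorem FirstHit.mem (h : FirstHit C v p) : v ∈ C :=
  List.mem_iff_getElem.mpr ⟨p, h.1, by rw [← List.getD_eq_getElem _ 0 h.1, h.2.1]⟩

theorem FirstHit.findIdx_eq (h : FirstHit C v p) : C.findIdx (· = v) = p := by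
  obtain ⟨hp, hpv, hbelow⟩ := h
  rw [List.getD_eq_getElem _ _ hp] at hpv
  rw [List.findIdx_eq hp]
  refine ⟨by simpa using hpv, fun s hs => ?_⟩
  have := hbelow s hs
  rw [List.getD_eq_getElem _ _ (by omega)] at this
  simpa using this.ne

theorem FirstHit.inject_eq (h : FirstHit C (e - 1) p) : inject C e = C.insertIdx (p + 1) e := by
  rw [inject, h.findIdx_eq, List.insertIdx_eq_take_append_cons_drop _ _ h.1]

end FirstHit

def NonfinalEligible (C : List ℤ) (j : ℕ) : Prop :=
  Eligible C j ∧ j + 1 ≠ C.length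

section Eligible

variable {C : List ℤ} {j : ℕ}

theorem nonfinalEligible_iff :
    NonfinalEligible C j ↔ j + 1 < C.length ∧
      (∃! i, i < j ∧ C.getD i 0 = C.getD j 0 - 1) ∧ C.getD (j + 1) 0 ≤ C.getD j 0 := by
  simp only [NonfinalEligible, Eligible, Finset.card_eq_one_iff_existsUnique,
    Finset.mem_filter, Finset.mem_range]
  constructor
  · rintro ⟨⟨hj, hu, hnext⟩, hne⟩
    exact ⟨by omega, hu, hnext.resolve_left hne⟩
  · rintro ⟨hj, hu, hnext⟩
    exact ⟨⟨by omega, hu, Or.inr hnext⟩, by omega⟩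

theorem eligNF?_eq_some_iff :
    eligNF? C = some j ↔ NonfinalEligible C j ∧ ∀ i < j, ¬NonfinalEligible C i := by
  rw [eligNF?, List.find?_range_eq_some]
  simp only [decide_eq_true_eq, List.mem_range, Bool.not_eq_true', decide_eq_false_iff_not,
    NonfinalEligible]
  exact ⟨fun ⟨h, _, hmin⟩ => ⟨h, hmin⟩, fun ⟨h, hmin⟩ => ⟨h, h.1.1, hmin⟩⟩

theorem eligNF?_eq_none_iff : eligNF? C = none ↔ ∀ j, ¬NonfinalEligible C j := by
  rw [eligNF?, List.find?_range_eq_none]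
  simp only [Bool.not_eq_true', decide_eq_false_iff_not, NonfinalEligible]
  exact ⟨fun h j hj => h j hj.1.1 hj, fun h j _ => h j⟩

theorem NonfinalEligible.exists_eligNF?_le (h : NonfinalEligible C j) :
    ∃ i ≤ j, eligNF? C = some i := by
  rcases hC : eligNF? C with _ | i
  · exact absurd h (eligNF?_eq_none_iff.mp hC j)
  · exact ⟨i, not_lt.mp fun hji => (eligNF?_eq_some_iff.mp hC).2 j hji h, rfl⟩

theorem NonfinalEligible.of_getD_eq {C' : List ℤ} (h : NonfinalEligible C' j)
    (hlen : j + 1 < C.length) (heq : ∀ s ≤ j + 1, C.getD s 0 = C'.getD s 0) :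
    NonfinalEligible C j := by
  obtain ⟨-, ⟨i, ⟨hij, hi⟩, huniq⟩, hfall⟩ := nonfinalEligible_iff.mp h
  rw [nonfinalEligible_iff, heq j (by omega), heq (j + 1) le_rfl]
  refine ⟨hlen, ⟨i, ⟨hij, by rwa [heq i (by omega)]⟩, fun s hs => huniq s ⟨hs.1, ?_⟩⟩,
    hfall⟩
  rw [← heq s (by omega)]
  exact hs.2

theorem nonfinalEligible_of_climb {t u : ℕ} (htu : t < u) (hu : u + 1 < C.length)
    (hbelow : ∀ s < t, C.getD s 0 < C.getD t 0)
    (hclimb : ∀ s, t ≤ s → s < u → C.getD (s + 1) 0 = C.getD s 0 + 1)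
    (hfall : C.getD (u + 1) 0 ≤ C.getD u 0) : NonfinalEligible C u := by
  have hval : ∀ i, t ≤ i → i ≤ u → C.getD i 0 = C.getD t 0 + i - t := by
    intro i hti
    induction i, hti using Nat.le_induction with
    | base => simp
    | succ i hti ih =>
      intro hiu
      rw [hclimb i hti (by omega), ih (by omega)]
      push_cast
      ring
  have hu' := hval u htu.le le_rfl
  refine nonfinalEligible_iff.mpr
    ⟨hu, ⟨u - 1, ⟨by omega, ?_⟩, fun i ⟨hiu, hi⟩ => ?_⟩, hfall⟩
  · rw [hval (u - 1) (by omega) (by omega), hu']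
    push_cast [show 1 ≤ u by omega]
    ring
  · by_contra hne
    rcases lt_or_ge i t with h | h
    · have := hbelow i h
      omega
    · rw [hval i h (by omega)] at hi
      omega

theorem AffineDyck.exists_nonfinalEligible (hC : AffineDyck C) {t u : ℕ} (htu : t < u)
    (hu : u + 1 < C.length) (hbelow : ∀ s < t, C.getD s 0 < C.getD t 0)
    (hrise : C.getD t 0 < C.getD (t + 1) 0) (hfall : C.getD (u + 1) 0 ≤ C.getD u 0) :
    ∃ i ≤ u, NonfinalEligible C i := by
  classical
  have hP : ∃ s, t < s ∧ C.getD (s + 1) 0 ≤ C.getD s 0 := ⟨u, htu, hfall⟩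
  set t' := Nat.find hP
  obtain ⟨htt', hfall'⟩ : t < t' ∧ C.getD (t' + 1) 0 ≤ C.getD t' 0 := Nat.find_spec hP
  have ht'u : t' ≤ u := Nat.find_min' hP ⟨htu, hfall⟩
  refine ⟨t', ht'u,
    nonfinalEligible_of_climb htt' (by omega) hbelow (fun s hts hst' => ?_) hfall'⟩
  have hlt : C.getD s 0 < C.getD (s + 1) 0 := by
    rcases hts.eq_or_lt with rfl | h
    · exact hrise
    · exact lt_of_not_ge fun hs => Nat.find_min hP hst' ⟨h, hs⟩
  have := hC.getD_succ_le (i := s) (by omega)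
  omega

end Eligible

section Extraction

variable {C : List ℤ} {j : ℕ}

/-- If the unique earlier visit to level `c_j - 1` were not at `j - 1`, the sequence would climb
from it and come down again before `j`, and the top of that climb would be an eligible index
left of `j`. -/
theorem OrdDyck.firstHit_of_eligNF? (hC : OrdDyck C) (hj : eligNF? C = some j) :
    0 < j ∧ FirstHit C (C.getD j 0 - 1) (j - 1) := by
  obtain ⟨hjC, hmin⟩ := eligNF?_eq_some_iff.mp hj
  obtain ⟨hlen, ⟨i₀, ⟨hi₀j, hi₀⟩, huniq⟩, hfall⟩ := nonfinalEligible_iff.mp hjC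
  obtain ⟨-, hA, h0, hnonneg⟩ := hC
  set e := C.getD j 0
  have hi₀nonneg : 0 ≤ C.getD i₀ 0 :=
    hnonneg _ (List.mem_iff_getElem.mpr ⟨i₀, by omega, (List.getD_eq_getElem _ _ _).symm⟩)
  obtain ⟨t, hti₀, htlen, htv, hbelow⟩ :=
    hA.exists_firstHit (b := i₀) (by omega) (by omega) hi₀.ge
  have htj : t < j := by omega
  have hunique : ∀ s < j, C.getD s 0 = e - 1 → s = t := fun s hs hsv =>
    (huniq s ⟨hs, hsv⟩).trans (huniq t ⟨htj, htv⟩).symm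
  have habove : ∀ s, t < s → s < j → e ≤ C.getD s 0 := by
    intro s hts hsj
    by_contra! hs
    have hs' : C.getD s 0 < e - 1 := lt_of_le_of_ne (by omega) fun h => by
      have := hunique s hsj h
      omega
    obtain ⟨r, hsr, hrj, hr, -⟩ := hA.exists_first_eq hsj.le (by omega) hs'.le (by omega)
    have hrj' : r < j := lt_of_le_of_ne hrj (by rintro rfl; omega)
    have := hunique r hrj' hr
    omega
  suffices hjt : j - 1 ≤ t by
    obtain rfl : t = j - 1 := by omega
    exact ⟨by omega, htlen, htv, hbelow⟩
  by_contra! htj'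
  obtain ⟨i, hij, hi⟩ := hA.exists_nonfinalEligible htj' (by omega)
    (by rwa [htv]) (by rw [htv]; have := habove (t + 1) (by omega) (by omega); omega)
    (by rw [Nat.sub_add_cancel (by omega)]; exact habove (j - 1) (by omega) (by omega))
  exact hmin i (by omega) hi

theorem OrdDyck.eraseIdx_of_eligNF? (hC : OrdDyck C) (hj : eligNF? C = some j) :
    OrdDyck (C.eraseIdx j) := by
  obtain ⟨hj0, hp⟩ := hC.firstHit_of_eligNF? hj
  obtain ⟨hlen, -, hfall⟩ := nonfinalEligible_iff.mp (eligNF?_eq_some_iff.mp hj).1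
  refine ⟨?_, hC.2.1.eraseIdx hj0 (by rw [hp.2.1]; omega), ?_, fun a ha => ?_⟩
  · rw [← List.length_pos_iff, List.length_eraseIdx_of_lt (by omega)]
    omega
  · rw [List.getD_eraseIdx_of_lt _ _ hj0]
    exact hC.2.2.1
  · exact hC.2.2.2 a ((C.eraseIdx_sublist j).subset ha)

theorem OrdDyck.inject_eraseIdx_of_eligNF? (hC : OrdDyck C) (hj : eligNF? C = some j) :
    inject (C.eraseIdx j) (C.getD j 0) = C := by
  obtain ⟨hj0, -, hpv, hbelow⟩ := hC.firstHit_of_eligNF? hj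
  have hjlen : j < C.length := (eligNF?_eq_some_iff.mp hj).1.1.1
  have hp : FirstHit (C.eraseIdx j) (C.getD j 0 - 1) (j - 1) := by
    refine ⟨by rw [List.length_eraseIdx_of_lt hjlen]; omega, ?_, fun s hs => ?_⟩
    · rwa [List.getD_eraseIdx_of_lt _ _ (by omega)]
    · rw [List.getD_eraseIdx_of_lt _ _ (by omega)]
      exact hbelow s hs
  rw [hp.inject_eq, Nat.sub_add_cancel hj0, List.getD_eq_getElem _ _ hjlen,
    List.insertIdx_eraseIdx_getElem hjlen]

theorem extractAux_eq_append (fuel : ℕ) (E C : List ℤ) :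
    extractAux fuel E C = (E ++ (extractAux fuel [] C).1, (extractAux fuel [] C).2) := by
  induction fuel generalizing E C with
  | zero => simp [extractAux]
  | succ fuel ih =>
    rcases h : eligNF? C with _ | j
    · simp [extractAux, h]
    · simp only [extractAux, h, List.nil_append]
      rw [ih (E ++ [C.getD j 0]), ih [C.getD j 0]]
      simp

theorem extractAux_of_eligNF?_eq_none (h : eligNF? C = none) (fuel : ℕ) (E : List ℤ) :
    extractAux fuel E C = (E, C) := by
  cases fuel <;> simp [extractAux, h]

theorem extractAux_succ_of_eligNF?_eq_some (h : eligNF? C = some j) (fuel : ℕ) (E : List ℤ) :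
    extractAux (fuel + 1) E C = extractAux fuel (E ++ [C.getD j 0]) (C.eraseIdx j) := by
  simp [extractAux, h]

theorem injectAll_nil (F : List ℤ) : injectAll F [] = F := rfl

theorem injectAll_cons (F : List ℤ) (e : ℤ) (E : List ℤ) :
    injectAll F (e :: E) = inject (injectAll F E) e := rfl

theorem OrdDyck.injectAll_extractAux {fuel : ℕ} (hC : OrdDyck C) (hfuel : C.length ≤ fuel) :
    injectAll (extractAux fuel [] C).2 (extractAux fuel [] C).1 = C := by
  induction fuel generalizing C with
  | zero => exact absurd hfuel (by have := List.length_pos_iff.mpr hC.1; omega)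
  | succ fuel ih =>
    rcases h : eligNF? C with _ | j
    · rw [extractAux_of_eligNF?_eq_none h, injectAll_nil]
    · have hjlen : j < C.length := (eligNF?_eq_some_iff.mp h).1.1.1
      rw [extractAux_succ_of_eligNF?_eq_some h, List.nil_append, extractAux_eq_append]
      dsimp only
      rw [List.singleton_append, injectAll_cons, ih (hC.eraseIdx_of_eligNF? h)
        (by rw [List.length_eraseIdx_of_lt hjlen]; omega)]
      exact hC.inject_eraseIdx_of_eligNF? h

end Extraction

structure EndsAtMax (m : ℤ) (C : List ℤ) : Prop where
  ordDyck : OrdDyck C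
  le : ∀ a ∈ C, a ≤ m
  getLast?_eq : C.getLast? = some m

section Injection

variable {m e : ℤ} {C : List ℤ}

theorem EndsAtMax.getD_last (hC : EndsAtMax m C) : C.getD (C.length - 1) 0 = m :=
  Option.some_injective _ ((List.getLast?_eq_some_getD 0 hC.ordDyck.1).symm.trans hC.getLast?_eq)

theorem EndsAtMax.exists_firstHit (hC : EndsAtMax m C) {v : ℤ} (hv : 0 ≤ v) (hvm : v < m) :
    ∃ p, p + 1 < C.length ∧ FirstHit C v p := by
  have hlen := List.length_pos_iff.mpr hC.ordDyck.1
  obtain ⟨p, hp, hpC⟩ := hC.ordDyck.2.1.exists_firstHit (v := v) (b := C.length - 1) (by omega)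
    (by rw [hC.ordDyck.2.2.1]; exact hv) (by rw [hC.getD_last]; exact hvm.le)
  refine ⟨p, lt_of_le_of_ne (by omega) fun h => ?_, hpC⟩
  have := hC.getD_last
  rw [← h, Nat.add_sub_cancel, hpC.2.1] at this
  omega

theorem EndsAtMax.insertIdx (hC : EndsAtMax m C) {p : ℕ} (hp : FirstHit C (e - 1) p)
    (hp1 : p + 1 < C.length) (he : 1 ≤ e) (hem : e ≤ m) :
    EndsAtMax m (C.insertIdx (p + 1) e) := by
  have hlast := hC.getD_last
  obtain ⟨⟨hne, hA, h0, hnonneg⟩, hle, -⟩ := hC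
  have hlen := List.length_insertIdx_of_le_length hp1.le e
  have hne' : C.insertIdx (p + 1) e ≠ [] := List.ne_nil_of_length_pos (by omega)
  refine ⟨⟨hne', hA.insertIdx hp.1 (by rw [hp.2.1]; omega) ?_, ?_, ?_⟩, ?_, ?_⟩
  · have := hA.getD_succ_le hp1
    rw [hp.2.1] at this
    omega
  · rw [List.getD_insertIdx_of_lt _ _ _ (by omega)]
    exact h0
  · intro a ha
    rcases (List.mem_insertIdx hp1.le).mp ha with rfl | ha
    · omega
    · exact hnonneg a ha
  · intro a ha
    rcases (List.mem_insertIdx hp1.le).mp ha with rfl | ha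
    · exact hem
    · exact hle a ha
  · rw [List.getLast?_eq_some_getD 0 hne', hlen, show C.length + 1 - 1 = C.length - 1 + 1 by omega,
      List.getD_insertIdx_of_ge _ _ _ (by omega), hlast]

/-- The injected entry tops a one-step climb from the first visit to level `e - 1`, so it is
eligible; an eligible index left of it would already be eligible in `C` and lie below level
`e - 1`, contradicting `hlead`. -/
theorem eligNF?_insertIdx (hA : AffineDyck C) {p : ℕ} (hp : FirstHit C (e - 1) p)
    (hp1 : p + 1 < C.length) (hlead : ∀ j, eligNF? C = some j → e ≤ C.getD j 0 + 1) :
    eligNF? (C.insertIdx (p + 1) e) = some (p + 1) := by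
  obtain ⟨-, hpv, hbelow⟩ := hp
  set C' := C.insertIdx (p + 1) e
  have hlen : C'.length = C.length + 1 := List.length_insertIdx_of_le_length hp1.le e
  have hpre : ∀ s ≤ p, C'.getD s 0 = C.getD s 0 := fun s hs =>
    List.getD_insertIdx_of_lt _ _ _ (by omega)
  have hself : C'.getD (p + 1) 0 = e := List.getD_insertIdx_self _ _ _ hp1.le
  have hnext : C'.getD (p + 1 + 1) 0 = C.getD (p + 1) 0 := List.getD_insertIdx_of_ge _ _ _ le_rfl
  rw [eligNF?_eq_some_iff]
  constructor
  · refine nonfinalEligible_of_climb (Nat.lt_succ_self p) (by omega) (fun s hs => ?_)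
      (fun s hs hs' => ?_) ?_
    · rw [hpre s hs.le, hpre p le_rfl, hpv]
      exact hbelow s hs
    · obtain rfl : s = p := by omega
      rw [hself, hpre s le_rfl, hpv]
      ring
    · have := hA.getD_succ_le hp1
      rw [hnext, hself]
      omega
  · intro i hi hiC'
    rcases (Nat.lt_succ_iff.mp hi).lt_or_eq with hip | rfl
    · obtain ⟨j, hji, hj⟩ := (hiC'.of_getD_eq (C := C) (by omega)
        fun s hs => (hpre s (by omega)).symm).exists_eligNF?_le
      have := hbelow j (by omega)
      have := hlead j hj
      omega
    · have := (nonfinalEligible_iff.mp hiC').2.2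
      rw [hself, hpre i le_rfl, hpv] at this
      omega

theorem EndsAtMax.inject_spec (hC : EndsAtMax m C) (he : 1 ≤ e) (hem : e ≤ m)
    (hlead : ∀ j, eligNF? C = some j → e ≤ C.getD j 0 + 1) :
    ∃ q ≤ C.length, inject C e = C.insertIdx q e ∧ EndsAtMax m (inject C e) ∧
      eligNF? (inject C e) = some q := by
  obtain ⟨p, hp1, hp⟩ := hC.exists_firstHit (v := e - 1) (by omega) (by omega)
  rw [hp.inject_eq]
  exact ⟨p + 1, hp1.le, rfl, hC.insertIdx hp hp1 he hem,
    eligNF?_insertIdx hC.ordDyck.2.1 hp hp1 hlead⟩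

end Injection

theorem EndsAtMax.ordDyck_append {m : ℤ} {C G : List ℤ} (hC : EndsAtMax m C)
    (hG : AffineDyck G) (hGm : ∀ a ∈ G, 0 ≤ a ∧ a ≤ m - 1) : OrdDyck (C ++ G) := by
  obtain ⟨⟨hne, hA, h0, hnonneg⟩, -, hlast⟩ := hC
  refine ⟨by simp [hne], List.isChain_append.mpr ⟨hA, hG, ?_⟩, ?_, fun a ha => ?_⟩
  · simp only [hlast, Option.mem_def, Option.some.injEq]
    rintro x rfl y hy
    linarith [(hGm y (List.mem_of_mem_head? hy)).2]
  · rwa [List.getD_append _ _ _ _ (List.length_pos_iff.mpr hne)]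
  · rcases List.mem_append.mp ha with ha | ha
    · exact hnonneg a ha
    · exact (hGm a ha).1

theorem OrdDyck.of_append {C G : List ℤ} (h : OrdDyck (C ++ G)) (hC : C ≠ []) : OrdDyck C := by
  refine ⟨hC, List.IsChain.left_of_append h.2.1, ?_,
    fun a ha => h.2.2.2 a (List.mem_append_left G ha)⟩
  rw [← List.getD_append _ G _ _ (List.length_pos_iff.mpr hC)]
  exact h.2.2.1

theorem phi1_append {C G : List ℤ} {m : ℤ} (hC : C.getLast? = some m) (hG : m ∉ G)
    (hmax : (C ++ G).foldr max 0 = m) :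
    phi1 (C ++ G) = ((extractAux C.length [] C).1, (extractAux C.length [] C).2, G) := by
  obtain ⟨R, hR⟩ : ∃ R, C.reverse = m :: R :=
    List.head?_eq_some_iff.mp (by rwa [List.head?_reverse])
  have hlen : C.length = R.length + 1 := by rw [← List.length_reverse, hR, List.length_cons]
  have hidx : (C ++ G).reverse.findIdx (· = m) = G.length := by
    rw [List.reverse_append, hR, List.findIdx_append, List.findIdx_eq_length.mpr]
    · simp [List.findIdx_cons]
    · intro a ha
      simp only [decide_eq_false_iff_not]
      rintro rfl
      exact hG (List.mem_reverse.mp ha)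
  simp only [phi1, hmax, hidx, List.length_append]
  rw [show C.length + G.length - 1 - G.length + 1 = C.length by omega, List.take_left' rfl,
    List.drop_left' rfl]

theorem length_inject (C : List ℤ) (e : ℤ) : (inject C e).length = C.length + 1 := by
  simp only [inject, List.length_append, List.length_take, List.length_cons, List.length_drop]
  omega

theorem length_injectAll (F E : List ℤ) : (injectAll F E).length = F.length + E.length := by
  induction E with
  | nil => rfl
  | cons e E ih => rw [injectAll_cons, length_inject, ih, List.length_cons, add_assoc]

section Type1

variable {m : ℤ} {F E : List ℤ}

theorem DyckSkeleton.endsAtMax (hF : DyckSkeleton m F) : EndsAtMax m F :=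
  ⟨hF.1, hF.2.1, hF.2.2.1⟩

theorem DyckSkeleton.eligNF?_eq_none (hF : DyckSkeleton m F) : eligNF? F = none :=
  eligNF?_eq_none_iff.mpr fun j hj => hj.2 (hF.2.2.2 j hj.1)

theorem le_getD_add_one_of_eligNF? {C : List ℤ} {e : ℤ}
    (hlead : (eligNF? C).map (fun j => C.getD j 0) = E.head?) (hE : ReverseDyck (e :: E)) :
    ∀ j, eligNF? C = some j → e ≤ C.getD j 0 + 1 := by
  intro j hj
  rw [hj, Option.map_some] at hlead
  cases E with
  | nil => simp at hlead
  | cons e' E =>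
    obtain rfl : C.getD j 0 = e' := by simpa using hlead
    have := (List.isChain_cons_cons.mp hE).1
    omega

theorem injectAll_spec (hF : DyckSkeleton m F) (hE : ReverseDyck E)
    (hEm : ∀ a ∈ E, 1 ≤ a ∧ a ≤ m) :
    EndsAtMax m (injectAll F E) ∧
      (eligNF? (injectAll F E)).map (fun j => (injectAll F E).getD j 0) = E.head? := by
  induction E with
  | nil => exact ⟨hF.endsAtMax, by simp [injectAll_nil, hF.eligNF?_eq_none]⟩
  | cons e E ih =>
    have hE' : ReverseDyck E := hE.tail
    obtain ⟨hC, hlead⟩ := ih hE' fun a ha => hEm a (List.mem_cons_of_mem e ha)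
    obtain ⟨he, hem⟩ := hEm e List.mem_cons_self
    obtain ⟨q, hq, hinj, hC', hqC⟩ :=
      hC.inject_spec he hem (le_getD_add_one_of_eligNF? hlead hE)
    rw [injectAll_cons]
    refine ⟨hC', ?_⟩
    rw [hqC, Option.map_some, hinj, List.getD_insertIdx_self _ _ _ hq, List.head?_cons]

theorem extractAux_injectAll (hF : DyckSkeleton m F) (hE : ReverseDyck E)
    (hEm : ∀ a ∈ E, 1 ≤ a ∧ a ≤ m) {fuel : ℕ} (hfuel : E.length ≤ fuel) :
    extractAux fuel [] (injectAll F E) = (E, F) := by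
  induction E generalizing fuel with
  | nil => exact extractAux_of_eligNF?_eq_none hF.eligNF?_eq_none fuel []
  | cons e E ih =>
    have hE' : ReverseDyck E := hE.tail
    have hEm' : ∀ a ∈ E, 1 ≤ a ∧ a ≤ m := fun a ha => hEm a (List.mem_cons_of_mem e ha)
    obtain ⟨hC, hlead⟩ := injectAll_spec hF hE' hEm'
    obtain ⟨he, hem⟩ := hEm e List.mem_cons_self
    obtain ⟨q, hq, hinj, -, hqC⟩ := hC.inject_spec he hem (le_getD_add_one_of_eligNF? hlead hE)
    obtain ⟨fuel, rfl⟩ : ∃ f, fuel = f + 1 := ⟨fuel - 1, by simp at hfuel; omega⟩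
    rw [injectAll_cons, extractAux_succ_of_eligNF?_eq_some hqC, hinj,
      List.getD_insertIdx_self _ _ _ hq, List.eraseIdx_insertIdx_self, extractAux_eq_append,
      ih hE' hEm' (by simpa using hfuel)]
    rfl

theorem injectDefined_of_reverseDyck (hF : DyckSkeleton m F) (hE : ReverseDyck E)
    (hEm : ∀ a ∈ E, 1 ≤ a ∧ a ≤ m) : InjectDefined F E := by
  induction E with
  | nil => trivial
  | cons e E ih =>
    have hE' : ReverseDyck E := hE.tail
    have hEm' : ∀ a ∈ E, 1 ≤ a ∧ a ≤ m := fun a ha => hEm a (List.mem_cons_of_mem e ha)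
    obtain ⟨he, hem⟩ := hEm e List.mem_cons_self
    obtain ⟨p, -, hp⟩ :=
      (injectAll_spec hF hE' hEm').1.exists_firstHit (v := e - 1) (by omega) (by omega)
    exact ⟨ih hE' hEm', hp.mem⟩

end Type1

theorem phi1_phi1inv_inverse_general (m : ℤ) :
    (∀ E F G : List ℤ, Type1 m E F G →
      InjectDefined F E ∧
      OrdDyck (phi1inv E F G) ∧
      m ∈ phi1inv E F G ∧ (∀ a ∈ phi1inv E F G, a ≤ m) ∧
      phi1 (phi1inv E F G) = (E, F, G)) ∧
    (∀ D : List ℤ, OrdDyck D → m ∈ D → (∀ a ∈ D, a ≤ m) →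
      phi1inv (phi1 D).1 (phi1 D).2.1 (phi1 D).2.2 = D) := by
  refine ⟨fun E F G ⟨hF, hE, hEm, hG, hGm⟩ => ?_, fun D hD hmD hDm => ?_⟩
  · obtain ⟨hC, -⟩ := injectAll_spec hF hE hEm
    have hmC : m ∈ injectAll F E := List.mem_of_getLast? hC.getLast?_eq
    have hle : ∀ a ∈ injectAll F E ++ G, a ≤ m := by
      simpa [or_imp, forall_and] using ⟨hC.le, fun a ha => by linarith [(hGm a ha).2]⟩
    have hmG : m ∉ G := fun h => by linarith [(hGm m h).2]
    have hmax := List.foldr_max_eq_of_mem (List.mem_append_left G hmC) hle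
      (hC.ordDyck.2.2.2 m hmC)
    refine ⟨injectDefined_of_reverseDyck hF hE hEm, hC.ordDyck_append hG hGm,
      List.mem_append_left G hmC, hle, ?_⟩
    rw [phi1inv, phi1_append hC.getLast?_eq hmG hmax,
      extractAux_injectAll hF hE hEm (by rw [length_injectAll]; omega)]
  · obtain ⟨C, G, rfl, hC, hmG⟩ := List.exists_eq_append_getLast?_eq_of_mem hmD
    rw [phi1_append hC hmG (List.foldr_max_eq_of_mem hmD hDm (hD.2.2.2 m hmD)), phi1inv,
      (hD.of_append (List.ne_nil_of_mem (List.mem_of_getLast? hC))).injectAll_extractAux le_rfl]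

/-- **`φ₁` and `φ₁⁻¹` are inverse.**  Fix `m ≥ 0`.  For every Type 1 Dyck
triple `(E, F, G)` of height `m`, every injection step of `φ₁⁻¹` is defined,
`φ₁⁻¹(E, F, G)` is an ordinary Dyck sequence with maximum `m`, and
`φ₁(φ₁⁻¹(E, F, G)) = (E, F, G)`; conversely `φ₁⁻¹(φ₁(D)) = D` for every
ordinary Dyck sequence `D` with maximum `m`. -/
theorem phi1_phi1inv_inverse (m : ℤ) (hm : 0 ≤ m) :
    (∀ E F G : List ℤ, Type1 m E F G →
      InjectDefined F E ∧
      OrdDyck (phi1inv E F G) ∧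
      m ∈ phi1inv E F G ∧ (∀ a ∈ phi1inv E F G, a ≤ m) ∧
      phi1 (phi1inv E F G) = (E, F, G)) ∧
    (∀ D : List ℤ, OrdDyck D → m ∈ D → (∀ a ∈ D, a ≤ m) →
      phi1inv (phi1 D).1 (phi1 D).2.1 (phi1 D).2.2 = D) :=
  phi1_phi1inv_inverse_general m
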